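/- arXiv:1605.07491 — 5 statements merged into one kernel-verified Lean document; each statement's English description precedes it below -/
import Mathlib

section
/- Let b ∈ {1,…,n}^n satisfy b_k ≠ l for all k, where 1 ≤ l ≤ n−1, and let a[l] = (1,2,…,l−1,l+1,l+1,l+2,…,n). Then Δ(I(b)) ⊆ I(b) ⊗ A(n) + A(n) ⊗ I(a[l]) in A(n) ⊗ A(n); consequently A(b) is a right A[l]-comodule via [x]_b ↦ Σ [x_{(1)}]_b ⊗ [x_{(2)}]_{a[l]}. -/
noncomputable section
open scoped TensorProduct

variable (k : Type) [Field k]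

/-- The two-parameter quantum matrix relations on the free algebra on generators
`x (i,j)`, `1 ≤ i,j ≤ n` (here indexed by `Fin n`). -/
inductive QRel (n : ℕ) (α β : k) :
    FreeAlgebra k (Fin n × Fin n) → FreeAlgebra k (Fin n × Fin n) → Prop
  | row (i : Fin n) {r s : Fin n} (h : r < s) :
      QRel n α β (FreeAlgebra.ι k (i, s) * FreeAlgebra.ι k (i, r))
        (α • (FreeAlgebra.ι k (i, r) * FreeAlgebra.ι k (i, s)))
  | col {i j : Fin n} (r : Fin n) (h : i < j) :
      QRel n α β (FreeAlgebra.ι k (j, r) * FreeAlgebra.ι k (i, r))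
        (β • (FreeAlgebra.ι k (i, r) * FreeAlgebra.ι k (j, r)))
  | mixed {i j r s : Fin n} (hij : i < j) (hrs : r < s) :
      QRel n α β (FreeAlgebra.ι k (j, r) * FreeAlgebra.ι k (i, s))
        ((α⁻¹ * β) • (FreeAlgebra.ι k (i, s) * FreeAlgebra.ι k (j, r)))
  | diag {i j r s : Fin n} (hij : i < j) (hrs : r < s) :
      QRel n α β (FreeAlgebra.ι k (j, s) * FreeAlgebra.ι k (i, r))
        (FreeAlgebra.ι k (i, r) * FreeAlgebra.ι k (j, s)
          + (β - α⁻¹) • (FreeAlgebra.ι k (i, s) * FreeAlgebra.ι k (j, r)))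

/-- The two-parameter quantum matrix algebra `A_{α,β}(n)`. -/
abbrev QMat (n : ℕ) (α β : k) := RingQuot (QRel k n α β)

/-- The generators `c_{ij}` of `A_{α,β}(n)`. -/
def qc (n : ℕ) (α β : k) (i j : Fin n) : QMat k n α β :=
  RingQuot.mkAlgHom k (QRel k n α β) (FreeAlgebra.ι k (i, j))

/-- The ordered monomial `c^ω = c₁₁^{ω₁₁} c₁₂^{ω₁₂} ⋯ cₙₙ^{ωₙₙ}`,
with factors taken in lexicographic order of the index `(i,j)`. -/
def qMon (n : ℕ) (α β : k) (ω : Fin n → Fin n → ℕ) : QMat k n α β :=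
  ((List.finRange n).map fun i =>
    ((List.finRange n).map fun j => qc k n α β i j ^ ω i j).prod).prod

/-- The relation identifying the generators `c_{is}` with `s > b_i` with `0`
(here in 0-based indexing: `c i s ~ 0` when `b i < s`). -/
def BRel (n : ℕ) (α β : k) (b : Fin n → Fin n) :
    QMat k n α β → QMat k n α β → Prop :=
  fun x y => (∃ i s : Fin n, b i < s ∧ x = qc k n α β i s) ∧ y = 0

/-- The quotient algebra `A(b) = A_{α,β}(n)/I(b)`. -/
abbrev QB (n : ℕ) (α β : k) (b : Fin n → Fin n) := RingQuot (BRel k n α β b)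

/-- The canonical projection `A(n) → A(b)`. -/
def qbProj (n : ℕ) (α β : k) (b : Fin n → Fin n) : QMat k n α β →ₐ[k] QB k n α β b :=
  RingQuot.mkAlgHom k (BRel k n α β b)

/-- The number of inversions (Coxeter length) of a permutation. -/
def invCount {n : ℕ} (σ : Equiv.Perm (Fin n)) : ℕ :=
  (Finset.univ.filter fun p : Fin n × Fin n => p.1 < p.2 ∧ σ p.2 < σ p.1).card

/-- The two-parameter quantum determinant
`d = Σ_σ (−α)^{−ℓ(σ)} c_{1,σ(1)} ⋯ c_{n,σ(n)}`. -/
def qdet (n : ℕ) (α β : k) : QMat k n α β :=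
  ∑ σ : Equiv.Perm (Fin n),
    ((-α)⁻¹ ^ invCount σ) • ((List.finRange n).map fun i => qc k n α β i (σ i)).prod

/-- The sequence `a[l] = δ + v_l` (0-based). -/
def aSeq (n : ℕ) (l : Fin n) (h : (l : ℕ) + 1 < n) : Fin n → Fin n :=
  fun i => if i = l then ⟨(l : ℕ) + 1, h⟩ else i

lemma qbProj_zero (n : ℕ) (α β : k) (b : Fin n → Fin n) (i s : Fin n) (h : b i < s) :
    qbProj k n α β b (qc k n α β i s) = 0 := by
  have := RingQuot.mkAlgHom_rel k (show BRel k n α β b (qc k n α β i s) 0 from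
    ⟨⟨i, s, h, rfl⟩, rfl⟩)
  simpa [qbProj] using this

/-- If `b_k ≠ l` for all `k`, then `Δ(I(b)) ⊆ I(b) ⊗ A(n) + A(n) ⊗ I(a[l])`
(expressed as: `(π_b ⊗ π_{a[l]}) ∘ Δ` kills `I(b) = ker π_b`); consequently `A(b)`
is a right `A[l]`-comodule via `[x]_b ↦ Σ [x_{(1)}]_b ⊗ [x_{(2)}]_{a[l]}`. -/
theorem qb_comodule_over_parabolic (n : ℕ) (α β : k) (hα : α ≠ 0) (hβ : β ≠ 0)
    (l : Fin n) (hl : (l : ℕ) + 1 < n)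
    (b : Fin n → Fin n) (hb : ∀ i, b i ≠ l)
    (Δ : QMat k n α β →ₐ[k] QMat k n α β ⊗[k] QMat k n α β)
    (hΔ : ∀ i j : Fin n, Δ (qc k n α β i j) =
      ∑ m : Fin n, qc k n α β i m ⊗ₜ[k] qc k n α β m j) :
    (∀ x : QMat k n α β, qbProj k n α β b x = 0 →
      TensorProduct.map (qbProj k n α β b).toLinearMap
        (qbProj k n α β (aSeq n l hl)).toLinearMap (Δ x) = 0) ∧
    ∃ ρ : QB k n α β b →ₗ[k] QB k n α β b ⊗[k] QB k n α β (aSeq n l hl),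
      ∀ x : QMat k n α β, ρ (qbProj k n α β b x) =
        TensorProduct.map (qbProj k n α β b).toLinearMap
          (qbProj k n α β (aSeq n l hl)).toLinearMap (Δ x) := by
  set πb := qbProj k n α β b with hπb
  set πa := qbProj k n α β (aSeq n l hl) with hπa
  set φ : QMat k n α β →ₐ[k] QB k n α β b ⊗[k] QB k n α β (aSeq n l hl) :=
    (Algebra.TensorProduct.map πb πa).comp Δ with hφ
  have hmap : TensorProduct.map πb.toLinearMap πa.toLinearMap
      = (Algebra.TensorProduct.map πb πa).toLinearMap := by
    apply TensorProduct.ext'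
    intro x y
    simp
  have hrel : ∀ ⦃x y : QMat k n α β⦄, BRel k n α β b x y → φ x = φ y := by
    rintro x y ⟨⟨i, s, his, rfl⟩, rfl⟩
    simp only [hφ, AlgHom.comp_apply, map_zero, hΔ, map_sum]
    refine Finset.sum_eq_zero fun m _ => ?_
    rw [Algebra.TensorProduct.map_tmul]
    by_cases hm : b i < m
    · rw [qbProj_zero k n α β b i m hm, TensorProduct.zero_tmul]
    · have hms : aSeq n l hl m < s := by
        push_neg at hm
        by_cases hml : m = l
        · have hlb : l < b i := lt_of_le_of_ne (hml ▸ hm) (Ne.symm (hb i))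
          simp only [aSeq, if_pos hml]
          exact Fin.lt_def.mpr (lt_of_le_of_lt (Fin.lt_def.mp hlb) (Fin.lt_def.mp his))
        · simp only [aSeq, if_neg hml]
          exact lt_of_le_of_lt hm his
      rw [qbProj_zero k n α β (aSeq n l hl) m s hms, TensorProduct.tmul_zero]
  have key : ∀ x : QMat k n α β,
      TensorProduct.map πb.toLinearMap πa.toLinearMap (Δ x)
        = RingQuot.liftAlgHom k ⟨φ, hrel⟩ (πb x) := by
    intro x
    rw [hmap]
    rw [hπb, show qbProj k n α β b = RingQuot.mkAlgHom k (BRel k n α β b) from rfl,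
      RingQuot.liftAlgHom_mkAlgHom_apply]
    rfl
  constructor
  · intro x hx
    rw [key, hx, map_zero]
  · exact ⟨(RingQuot.liftAlgHom k ⟨φ, hrel⟩).toLinearMap, fun x => (key x).symm⟩
end
end

section
/- For every b ∈ {1,…,n}^n, Δ(I(b)) ⊆ I(b) ⊗ A(n) + A(n) ⊗ I(δ), where δ = (1,2,…,n); hence A(b) is a right A(δ)-comodule via [x]_b ↦ Σ [x_{(1)}]_b ⊗ [x_{(2)}]_δ. -/
noncomputable section
open scoped TensorProduct

variable (k : Type) [Field k]

/-- For every `b`, `Δ(I(b)) ⊆ I(b) ⊗ A(n) + A(n) ⊗ I(δ)` where `δ = (1,2,…,n)`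
(expressed as: `(π_b ⊗ π_δ) ∘ Δ` kills `I(b) = ker π_b`); hence `A(b)` is a right
`A(δ)`-comodule via `[x]_b ↦ Σ [x_{(1)}]_b ⊗ [x_{(2)}]_δ`. -/
theorem qb_comodule_over_borel (n : ℕ) (α β : k) (hα : α ≠ 0) (hβ : β ≠ 0)
    (b : Fin n → Fin n)
    (Δ : QMat k n α β →ₐ[k] QMat k n α β ⊗[k] QMat k n α β)
    (hΔ : ∀ i j : Fin n, Δ (qc k n α β i j) =
      ∑ m : Fin n, qc k n α β i m ⊗ₜ[k] qc k n α β m j) :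
    (∀ x : QMat k n α β, qbProj k n α β b x = 0 →
      TensorProduct.map (qbProj k n α β b).toLinearMap
        (qbProj k n α β id).toLinearMap (Δ x) = 0) ∧
    ∃ ρ : QB k n α β b →ₗ[k] QB k n α β b ⊗[k] QB k n α β id,
      ∀ x : QMat k n α β, ρ (qbProj k n α β b x) =
        TensorProduct.map (qbProj k n α β b).toLinearMap
          (qbProj k n α β id).toLinearMap (Δ x) := by
  -- the algebra map φ = (π_b ⊗ π_δ) ∘ Δ
  set φ : QMat k n α β →ₐ[k] QB k n α β b ⊗[k] QB k n α β id :=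
    (Algebra.TensorProduct.map (qbProj k n α β b) (qbProj k n α β id)).comp Δ with hφ
  have hproj : ∀ (c : Fin n → Fin n) (i s : Fin n), c i < s →
      qbProj k n α β c (qc k n α β i s) = 0 := by
    intro c i s hs
    have : qbProj k n α β c (qc k n α β i s) = qbProj k n α β c 0 :=
      RingQuot.mkAlgHom_rel k ⟨⟨i, s, hs, rfl⟩, rfl⟩
    simpa using this
  have hkill : ∀ x y, BRel k n α β b x y → φ x = φ y := by
    rintro x y ⟨⟨i, s, hs, rfl⟩, rfl⟩
    simp only [hφ, AlgHom.comp_apply, map_zero, hΔ]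
    rw [map_sum]
    refine Finset.sum_eq_zero fun m _ => ?_
    rw [Algebra.TensorProduct.map_tmul]
    rcases lt_or_ge (b i) m with hm | hm
    · rw [hproj b i m hm, TensorProduct.zero_tmul]
    · rw [hproj id m s (lt_of_le_of_lt hm hs), TensorProduct.tmul_zero]
  set ρbar : QB k n α β b →ₐ[k] QB k n α β b ⊗[k] QB k n α β id :=
    RingQuot.liftAlgHom k ⟨φ, hkill⟩ with hρ
  have key : ∀ x : QMat k n α β, ρbar (qbProj k n α β b x) =
      TensorProduct.map (qbProj k n α β b).toLinearMap
        (qbProj k n α β id).toLinearMap (Δ x) := by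
    intro x
    have h1 : ρbar (qbProj k n α β b x) = φ x :=
      RingQuot.liftAlgHom_mkAlgHom_apply k φ hkill x
    rw [h1, hφ, AlgHom.comp_apply]
    induction Δ x using TensorProduct.induction_on with
    | zero => simp
    | tmul a c => simp
    | add a c ha hc => simp [ha, hc]
  refine ⟨fun x hx => ?_, ρbar.toLinearMap, key⟩
  rw [← key x, hx, map_zero]
end
end

section
/- In A(b) with b non-decreasing, for any ω ∈ M_n(ℕ) with ω_{ij} = 0 whenever j > b_i, one has [c^ω]_b [c_{l,b_l}]_b = α^s β^t [c^{ω + e_{l,b_l}}]_b for some integers s, t (depending on ω and l), where e_{l,b_l} is the elementary matrix with 1 in position (l, b_l). In particular, right multiplication by [c_{l,b_l}]_b maps the monomial basis of A(b) bijectively, up to nonzero scalars, onto the set of basis monomials with ω_{l,b_l} ≠ 0. -/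
noncomputable section
open scoped TensorProduct

variable (k : Type) [Field k]

section Aux

lemma bc_eq_zero {n : ℕ} {α β : k} {b : Fin n → Fin n} {i j : Fin n} (h : b i < j) :
    qbProj k n α β b (qc k n α β i j) = 0 := by
  have h0 : BRel k n α β b (qc k n α β i j) 0 := ⟨⟨i, j, h, rfl⟩, rfl⟩
  have := RingQuot.mkAlgHom_rel k h0
  simpa [qbProj] using this

/-- Commutation predicate: `y * x = α^s β^t • (x * y)` for some integers `s t`. -/
def QComm {R : Type} [Ring R] [Algebra k R] (α β : k) (x y : R) : Prop :=
  ∃ s t : ℤ, y * x = (α ^ s * β ^ t) • (x * y)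

lemma QComm.one {R : Type} [Ring R] [Algebra k R] (α β : k) (x : R) : QComm k α β x 1 :=
  ⟨0, 0, by simp⟩

lemma QComm.mul {R : Type} [Ring R] [Algebra k R] {α β : k} (hα : α ≠ 0) (hβ : β ≠ 0)
    {x y z : R} (hy : QComm k α β x y) (hz : QComm k α β x z) : QComm k α β x (y * z) := by
  obtain ⟨s1, t1, h1⟩ := hy
  obtain ⟨s2, t2, h2⟩ := hz
  refine ⟨s1 + s2, t1 + t2, ?_⟩
  rw [mul_assoc, h2, mul_smul_comm, ← mul_assoc, h1, smul_mul_assoc, smul_smul,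
    mul_assoc x y z]
  congr 1
  rw [zpow_add₀ hα, zpow_add₀ hβ]
  ring

lemma QComm.pow {R : Type} [Ring R] [Algebra k R] {α β : k} (hα : α ≠ 0) (hβ : β ≠ 0)
    {x y : R} (hy : QComm k α β x y) (m : ℕ) : QComm k α β x (y ^ m) := by
  induction m with
  | zero => simpa using QComm.one k α β x
  | succ m ih => rw [pow_succ]; exact QComm.mul k hα hβ ih hy

lemma QComm.list_prod {R : Type} [Ring R] [Algebra k R] {α β : k} (hα : α ≠ 0) (hβ : β ≠ 0)
    {x : R} {L : List R} (h : ∀ y ∈ L, QComm k α β x y) : QComm k α β x L.prod := by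
  induction L with
  | nil => simpa using QComm.one k α β x
  | cons a L ih =>
      rw [List.prod_cons]
      exact QComm.mul k hα hβ (h a (by simp)) (ih fun y hy => h y (by simp [hy]))

lemma qcomm_gen {n : ℕ} {α β : k} {b : Fin n → Fin n} {l i : Fin n} (hli : l < i) (j : Fin n) :
    QComm k α β (qbProj k n α β b (qc k n α β l (b l))) (qbProj k n α β b (qc k n α β i j)) := by
  rcases lt_trichotomy j (b l) with h | h | h
  · refine ⟨-1, 1, ?_⟩
    have h0 := RingQuot.mkAlgHom_rel k (QRel.mixed (n := n) (α := α) (β := β) hli h)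
    have h1 : qc k n α β i j * qc k n α β l (b l) =
        (α⁻¹ * β) • (qc k n α β l (b l) * qc k n α β i j) := by
      simpa [qc, map_mul, map_smul] using h0
    have h2 := congrArg (qbProj k n α β b) h1
    simp only [map_mul, map_smul] at h2
    rw [h2, zpow_neg_one, zpow_one]
  · subst h
    refine ⟨0, 1, ?_⟩
    have h0 := RingQuot.mkAlgHom_rel k (QRel.col (n := n) (α := α) (β := β) (b l) hli)
    have h1 : qc k n α β i (b l) * qc k n α β l (b l) =
        β • (qc k n α β l (b l) * qc k n α β i (b l)) := by
      simpa [qc, map_mul, map_smul] using h0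
    have h2 := congrArg (qbProj k n α β b) h1
    simp only [map_mul, map_smul] at h2
    rw [h2, zpow_zero, zpow_one, one_mul]
  · refine ⟨0, 0, ?_⟩
    have h0 := RingQuot.mkAlgHom_rel k (QRel.diag (n := n) (α := α) (β := β) hli h)
    have h1 : qc k n α β i j * qc k n α β l (b l) =
        qc k n α β l (b l) * qc k n α β i j
          + (β - α⁻¹) • (qc k n α β l j * qc k n α β i (b l)) := by
      simpa [qc, map_mul, map_smul, map_add] using h0
    have h2 := congrArg (qbProj k n α β b) h1
    simp only [map_mul, map_smul, map_add] at h2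
    rw [h2, bc_eq_zero k h]
    simp

lemma finRange_split {n : ℕ} {M : Type} [Monoid M] (f : Fin n → M) (m : Fin n) :
    ((List.finRange n).map f).prod =
      (((List.finRange n).take (m : ℕ)).map f).prod * f m *
        (((List.finRange n).drop ((m : ℕ) + 1)).map f).prod := by
  have hlen : (m : ℕ) < (List.finRange n).length := by simpa using m.isLt
  have h1 : List.finRange n =
      (List.finRange n).take (m : ℕ) ++ m :: (List.finRange n).drop ((m : ℕ) + 1) := by
    conv_lhs => rw [← List.take_append_drop (m : ℕ) (List.finRange n)]
    rw [List.drop_eq_getElem_cons hlen, List.getElem_finRange]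
    simp
  conv_lhs => rw [h1]
  rw [List.map_append, List.map_cons, List.prod_append, List.prod_cons, ← mul_assoc]

lemma lt_of_mem_drop {n : ℕ} {m j : Fin n} (h : j ∈ (List.finRange n).drop ((m : ℕ) + 1)) :
    m < j := by
  obtain ⟨idx, hidx, hj⟩ := List.mem_iff_getElem.mp h
  rw [List.getElem_drop, List.getElem_finRange] at hj
  subst hj
  simp only [Fin.lt_def, Fin.coe_cast]
  omega

lemma lt_of_mem_take {n : ℕ} {m j : Fin n} (h : j ∈ (List.finRange n).take (m : ℕ)) :
    j < m := by
  obtain ⟨idx, hidx, hj⟩ := List.mem_iff_getElem.mp h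
  have hidx' : idx < (m : ℕ) := by simp [List.length_take] at hidx; omega
  rw [List.getElem_take, List.getElem_finRange] at hj
  subst hj
  simpa [Fin.lt_def] using hidx'

lemma qbProj_qMon (n : ℕ) (α β : k) (b : Fin n → Fin n) (ν : Fin n → Fin n → ℕ) :
    qbProj k n α β b (qMon k n α β ν) =
      ((List.finRange n).map fun i =>
        ((List.finRange n).map fun j =>
          qbProj k n α β b (qc k n α β i j) ^ ν i j).prod).prod := by
  simp only [qMon, map_list_prod, List.map_map, Function.comp_def, map_pow]

end Aux

/-- In `A(b)` with `b` non-decreasing: for any `ω ∈ M_n(ℕ)` with `ω_{ij} = 0` whenever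
`j > b_i`, one has `[c^ω]_b [c_{l,b_l}]_b = α^s β^t [c^{ω + e_{l,b_l}}]_b` for some
integers `s, t`; the scalar `α^s β^t` is nonzero. -/
theorem qb_monomial_mul_corner (n : ℕ) (α β : k) (hα : α ≠ 0) (hβ : β ≠ 0)
    (b : Fin n → Fin n) (hb : Monotone b) (l : Fin n)
    (ω : Fin n → Fin n → ℕ) (hω : ∀ i j : Fin n, b i < j → ω i j = 0) :
    ∃ s t : ℤ,
      qbProj k n α β b (qMon k n α β ω) * qbProj k n α β b (qc k n α β l (b l)) =
        (α ^ s * β ^ t) •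
          qbProj k n α β b (qMon k n α β
            (fun i j => ω i j + if i = l ∧ j = b l then 1 else 0)) ∧
      α ^ s * β ^ t ≠ 0 := by
  classical
  have hrow_ne : ∀ i : Fin n, i ≠ l →
      (((List.finRange n).map fun j => qbProj k n α β b (qc k n α β i j) ^
        (ω i j + if i = l ∧ j = b l then 1 else 0)).prod) =
      (((List.finRange n).map fun j => qbProj k n α β b (qc k n α β i j) ^ ω i j).prod) := by
    intro i hi
    congr 1
    apply List.map_congr_left
    intro j _
    simp [hi]
  have hrowl :
      (((List.finRange n).map fun j => qbProj k n α β b (qc k n α β l j) ^ ω l j).prod) *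
        qbProj k n α β b (qc k n α β l (b l)) =
      (((List.finRange n).map fun j => qbProj k n α β b (qc k n α β l j) ^
        (ω l j + if l = l ∧ j = b l then 1 else 0)).prod) := by
    rw [finRange_split (fun j => qbProj k n α β b (qc k n α β l j) ^ ω l j) (b l),
        finRange_split (fun j => qbProj k n α β b (qc k n α β l j) ^
          (ω l j + if l = l ∧ j = b l then 1 else 0)) (b l)]
    beta_reduce
    have hQ : (((List.finRange n).drop ((b l : ℕ) + 1)).map fun j =>
        qbProj k n α β b (qc k n α β l j) ^ ω l j).prod = 1 := by
      apply List.prod_eq_one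
      intro y hy
      obtain ⟨j, hj, rfl⟩ := List.mem_map.mp hy
      rw [hω l j (lt_of_mem_drop hj), pow_zero]
    have hQ' : (((List.finRange n).drop ((b l : ℕ) + 1)).map fun j =>
        qbProj k n α β b (qc k n α β l j) ^
          (ω l j + if l = l ∧ j = b l then 1 else 0)).prod = 1 := by
      apply List.prod_eq_one
      intro y hy
      obtain ⟨j, hj, rfl⟩ := List.mem_map.mp hy
      have hj' := lt_of_mem_drop hj
      rw [hω l j hj']
      simp [ne_of_gt hj']
    have hA : (((List.finRange n).take ((b l : ℕ))).map fun j =>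
        qbProj k n α β b (qc k n α β l j) ^
          (ω l j + if l = l ∧ j = b l then 1 else 0)) =
        (((List.finRange n).take ((b l : ℕ))).map fun j =>
        qbProj k n α β b (qc k n α β l j) ^ ω l j) := by
      apply List.map_congr_left
      intro j hj
      have : j ≠ b l := ne_of_lt (lt_of_mem_take hj)
      simp [this]
    rw [hQ, hQ', hA, mul_one, mul_one]
    have he : (ω l (b l) + if l = l ∧ b l = b l then 1 else 0) = ω l (b l) + 1 := by simp
    rw [he, pow_succ, ← mul_assoc]
  obtain ⟨s, t, hst⟩ : QComm k α β (qbProj k n α β b (qc k n α β l (b l)))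
      ((((List.finRange n).drop ((l : ℕ) + 1)).map fun i =>
        ((List.finRange n).map fun j => qbProj k n α β b (qc k n α β i j) ^ ω i j).prod).prod) := by
    apply QComm.list_prod k hα hβ
    intro y hy
    obtain ⟨i, hi, rfl⟩ := List.mem_map.mp hy
    apply QComm.list_prod k hα hβ
    intro z hz
    obtain ⟨j, hj, rfl⟩ := List.mem_map.mp hz
    exact QComm.pow k hα hβ (qcomm_gen k (lt_of_mem_drop hi) j) (ω i j)
  refine ⟨s, t, ?_, mul_ne_zero (zpow_ne_zero _ hα) (zpow_ne_zero _ hβ)⟩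
  rw [qbProj_qMon, qbProj_qMon]
  rw [finRange_split (fun i => ((List.finRange n).map fun j =>
        qbProj k n α β b (qc k n α β i j) ^ ω i j).prod) l,
      finRange_split (fun i => ((List.finRange n).map fun j =>
        qbProj k n α β b (qc k n α β i j) ^
          (ω i j + if i = l ∧ j = b l then 1 else 0)).prod) l]
  beta_reduce
  have hA' : (((List.finRange n).take ((l : ℕ))).map fun i =>
      ((List.finRange n).map fun j => qbProj k n α β b (qc k n α β i j) ^
        (ω i j + if i = l ∧ j = b l then 1 else 0)).prod) =
      (((List.finRange n).take ((l : ℕ))).map fun i =>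
      ((List.finRange n).map fun j => qbProj k n α β b (qc k n α β i j) ^ ω i j).prod) := by
    apply List.map_congr_left
    intro i hi
    exact hrow_ne i (ne_of_lt (lt_of_mem_take hi))
  have hD' : (((List.finRange n).drop ((l : ℕ) + 1)).map fun i =>
      ((List.finRange n).map fun j => qbProj k n α β b (qc k n α β i j) ^
        (ω i j + if i = l ∧ j = b l then 1 else 0)).prod) =
      (((List.finRange n).drop ((l : ℕ) + 1)).map fun i =>
      ((List.finRange n).map fun j => qbProj k n α β b (qc k n α β i j) ^ ω i j).prod) := by
    apply List.map_congr_left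
    intro i hi
    exact hrow_ne i (ne_of_gt (lt_of_mem_drop hi))
  rw [hA', hD']
  rw [mul_assoc _ _ (qbProj k n α β b (qc k n α β l (b l))), hst, mul_smul_comm,
    ← mul_assoc, mul_assoc _ _ (qbProj k n α β b (qc k n α β l (b l))), hrowl]
end
end

section
/- The two-parameter quantum determinant d = Σ_{σ ∈ Σ_n} (−α)^{−ℓ(σ)} c_{1,σ(1)} c_{2,σ(2)} ⋯ c_{n,σ(n)} in A_{α,β}(n) equals Σ_{σ ∈ Σ_n} (−β)^{−ℓ(σ)} c_{σ(1),1} c_{σ(2),2} ⋯ c_{σ(n),n}. -/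
noncomputable section
open scoped TensorProduct

variable (k : Type) [Field k]

/-!
Only the mixed relation `c_{jr} c_{is} = α⁻¹β c_{is} c_{jr}` (`i < j`, `r < s`) is needed.
Reordering the column monomial `c_{σ(1),1} ⋯ c_{σ(n),n}` into the row monomial
`c_{1,σ⁻¹(1)} ⋯ c_{n,σ⁻¹(n)}` exchanges exactly the pairs of factors forming inversions of `σ`,
each at the cost of `α⁻¹β`, so the column term of `σ` is `(α⁻¹β)^{ℓ(σ)}` times the row term
of `σ⁻¹`. As `ℓ(σ⁻¹) = ℓ(σ)` and `(-β)⁻¹ α⁻¹β = (-α)⁻¹`, the two sums agree after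
reindexing by `σ ↦ σ⁻¹`.
-/

section Permutations

variable {m : ℕ}

-- `permCons i e` is `Fin.cons i (i.succAbove ∘ e)`.
def permCons (i : Fin (m + 1)) (e : Equiv.Perm (Fin m)) : Equiv.Perm (Fin (m + 1)) :=
  ((finSuccEquiv m).trans e.optionCongr).trans (finSuccEquiv' i).symm

@[simp] theorem permCons_zero (i : Fin (m + 1)) (e : Equiv.Perm (Fin m)) :
    permCons i e 0 = i := by
  simp [permCons]

@[simp] theorem permCons_succ (i : Fin (m + 1)) (e : Equiv.Perm (Fin m)) (x : Fin m) :
    permCons i e x.succ = i.succAbove (e x) := by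
  simp [permCons]

theorem permCons_surjective (τ : Equiv.Perm (Fin (m + 1))) :
    ∃ i e, permCons i e = τ := by
  have hinj : Function.Injective fun p : Fin (m + 1) × Equiv.Perm (Fin m) => permCons p.1 p.2 := by
    rintro ⟨i, e⟩ ⟨i', e'⟩ h
    obtain rfl : i = i' := by simpa using congr($h 0)
    refine Prod.ext rfl (Equiv.ext fun x => Fin.succAbove_right_injective (p := i) ?_)
    simpa using congr($h x.succ)
  have hcard : Fintype.card (Fin (m + 1) × Equiv.Perm (Fin m)) =
      Fintype.card (Equiv.Perm (Fin (m + 1))) := by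
    simp [Fintype.card_perm, Nat.factorial_succ]
  obtain ⟨⟨i, e⟩, h⟩ := ((Fintype.bijective_iff_injective_and_card _).2 ⟨hinj, hcard⟩).2 τ
  exact ⟨i, e, h⟩

theorem invCount_inv (σ : Equiv.Perm (Fin m)) : invCount σ⁻¹ = invCount σ := by
  refine Finset.card_nbij' (fun p => (σ⁻¹ p.2, σ⁻¹ p.1)) (fun p => (σ p.2, σ p.1)) ?_ ?_ ?_ ?_ <;>
    intro p <;> simp +contextual

theorem invCount_eq_sum (σ : Equiv.Perm (Fin m)) :
    invCount σ = ∑ x, ∑ y, if x < y ∧ σ y < σ x then 1 else 0 := by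
  rw [invCount, Finset.card_filter, Fintype.sum_prod_type]

theorem invCount_permCons (i : Fin (m + 1)) (e : Equiv.Perm (Fin m)) :
    invCount (permCons i e) = i + invCount e := by
  have hfirst : (∑ y : Fin m, if i.succAbove (e y) < i then 1 else 0) = (i : ℕ) := by
    rw [Equiv.sum_comp e (fun z => if i.succAbove z < i then 1 else 0), Finset.sum_boole]
    simp_rw [Fin.succAbove_lt_iff_castSucc_lt, Fin.lt_def, Fin.val_castSucc]
    rw [Nat.cast_id, Fin.card_filter_val_lt]
    omega
  rw [invCount_eq_sum, invCount_eq_sum, Fin.sum_univ_succ, Fin.sum_univ_succ]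
  congr 1
  · simpa using hfirst
  · refine Finset.sum_congr rfl fun x _ => ?_
    simp only [Fin.sum_univ_succ, permCons_succ, permCons_zero, Fin.succ_lt_succ_iff,
      Fin.succAbove_lt_succAbove_iff, Fin.not_lt_zero, false_and, if_false, zero_add]

end Permutations

section SkewCommute

variable {R A : Type*} [Monoid R] [Monoid A] [MulAction R A] [IsScalarTower R A A]
  [SMulCommClass R A A]

theorem List.prod_ofFn_eq_smul_mul_prod_ofFn_succAbove (c : R) {m : ℕ} (F : Fin (m + 1) → A)
    (i : Fin (m + 1)) (h : ∀ x < i, F x * F i = c • (F i * F x)) :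
    (List.ofFn F).prod = c ^ (i : ℕ) • (F i * (List.ofFn fun x => F (i.succAbove x)).prod) := by
  induction m with
  | zero =>
    obtain rfl := Fin.fin_one_eq_zero i
    simp
  | succ m ih =>
    cases i using Fin.cases with
    | zero => simp [List.ofFn_succ]
    | succ j =>
      have h0 : F 0 * F j.succ = c • (F j.succ * F 0) := h 0 j.succ_pos
      rw [List.ofFn_succ, List.prod_cons,
        ih (fun x => F x.succ) j fun x hx => h x.succ (Fin.succ_lt_succ_iff.2 hx),
        List.ofFn_succ (f := fun x => F (j.succ.succAbove x)), List.prod_cons]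
      simp only [Fin.succ_succAbove_zero, Fin.succ_succAbove_succ, Fin.val_succ, pow_succ,
        mul_smul_comm, ← mul_assoc, h0, smul_mul_assoc, smul_smul]

theorem List.prod_ofFn_eq_pow_invCount_smul (c : R) {m : ℕ} (F : Fin m → A)
    (τ : Equiv.Perm (Fin m))
    (h : ∀ x y, x < y → τ y < τ x → F (τ y) * F (τ x) = c • (F (τ x) * F (τ y))) :
    (List.ofFn F).prod = c ^ invCount τ • (List.ofFn fun x => F (τ x)).prod := by
  induction m with
  | zero => simp [invCount]
  | succ m ih =>
    -- `i = τ 0` indexes the factor that must come first: pull it to the front, then induct.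
    obtain ⟨i, e, rfl⟩ := permCons_surjective τ
    have hfront : ∀ x < i, F x * F i = c • (F i * F x) := by
      intro x hx
      obtain ⟨y, rfl⟩ := (permCons i e).surjective x
      have hy0 : 0 < y := Fin.pos_iff_ne_zero.2 <| by rintro rfl; simp at hx
      simpa using h 0 y hy0 (by simpa using hx)
    have htail : ∀ x y, x < y → e y < e x → F (i.succAbove (e y)) * F (i.succAbove (e x)) =
        c • (F (i.succAbove (e x)) * F (i.succAbove (e y))) := by
      intro x y hxy hexy
      simpa using h x.succ y.succ (Fin.succ_lt_succ_iff.2 hxy) (by simpa using hexy)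
    rw [List.prod_ofFn_eq_smul_mul_prod_ofFn_succAbove c F i hfront, ih _ e htail,
      invCount_permCons, List.ofFn_succ]
    simp only [permCons_zero, permCons_succ, List.prod_cons, mul_smul_comm, smul_smul, pow_add]

end SkewCommute

section QuantumMatrix

variable {k} {n : ℕ} {α β : k}

theorem qc_mul_qc_of_lt_of_lt {i j r s : Fin n} (hij : i < j) (hrs : r < s) :
    qc k n α β j r * qc k n α β i s = (α⁻¹ * β) • (qc k n α β i s * qc k n α β j r) := by
  simpa [qc] using RingQuot.mkAlgHom_rel k (QRel.mixed (k := k) (α := α) (β := β) hij hrs)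

theorem prod_ofFn_qc_col_eq (σ : Equiv.Perm (Fin n)) :
    (List.ofFn fun j => qc k n α β (σ j) j).prod =
      (α⁻¹ * β) ^ invCount σ • (List.ofFn fun i => qc k n α β i (σ⁻¹ i)).prod := by
  rw [← invCount_inv, List.prod_ofFn_eq_pow_invCount_smul (α⁻¹ * β) _ σ⁻¹]
  · simp
  · intro x y hxy hσ
    simpa using qc_mul_qc_of_lt_of_lt hxy hσ

end QuantumMatrix

theorem qdet_row_eq_col (n : ℕ) (α β : k) (hβ : β ≠ 0) :
    qdet k n α β =
      ∑ σ : Equiv.Perm (Fin n),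
        ((-β)⁻¹ ^ invCount σ) •
          ((List.finRange n).map fun i => qc k n α β (σ i) i).prod := by
  have hcoeff : (-β)⁻¹ * (α⁻¹ * β) = (-α)⁻¹ := by field_simp
  rw [qdet, ← Equiv.sum_comp (Equiv.inv (Equiv.Perm (Fin n)))]
  refine Finset.sum_congr rfl fun σ _ => ?_
  simp only [← List.ofFn_eq_map, prod_ofFn_qc_col_eq, smul_smul, ← mul_pow, hcoeff,
    Equiv.inv_apply, invCount_inv]
end
end

section
/- Let λ = (λ_1,…,λ_m) be a composition of n and b = (λ_1^{λ_1}, (λ_1+λ_2)^{λ_2}, …, n^{λ_m}). Let b′ = (λ_1^{λ_1}, …, (λ_1+⋯+λ_k −1)^{λ_k}, …, (λ_1+⋯+λ_w −1)^{λ_w −1}, …, (n−1)^{λ_m}) be obtained from a position (i,s) with s > b_i lying in block (k,w), k < w. Then the quantum determinant d ∈ A(n−1) lies in the ideal I(b′); equivalently, for every σ ∈ Σ_{n−1} there exists j with c_{j,σ(j)} ∈ I(b′). -/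
noncomputable section
open scoped TensorProduct

variable (k : Type) [Field k]

/-- Concatenation of constant blocks: given block sizes and block values, produce
the sequence consisting of each value repeated the corresponding number of times. -/
def concatRep (sizes vals : List ℕ) : List ℕ :=
  (List.zipWith List.replicate sizes vals).flatten

/-- The relation identifying the generators `c_{jt}` with `t > b_j` with `0`, for a
1-based sequence of bounds given by a list of natural numbers. -/
def BRelNat (m : ℕ) (α β : k) (bl : List ℕ) :
    QMat k m α β → QMat k m α β → Prop :=
  fun x y => (∃ j t : Fin m, bl.getD j 0 < (t : ℕ) + 1 ∧ x = qc k m α β j t) ∧ y = 0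

/-!
Only the first `kIdx + 1` blocks of `b′` matter. Their total size `T = λ_1 + ⋯ + λ_{kIdx+1}`
is at most `n − 1`, because the later block `w` is nonempty, and every bound `b′_j` with
`j < T` is at most `T − 1`. A permutation `σ` with `σ(j) ≤ b′_j` for all `j` would therefore
inject `{1, …, T}` into `{1, …, T − 1}`. So every term of the quantum determinant contains
a generator of `I(b′)`.
-/

theorem Equiv.Perm.exists_le_apply_of_forall_lt {m T : ℕ} (σ : Equiv.Perm (Fin m))
    (hT : 0 < T) (hTm : T ≤ m) (bound : ℕ → ℕ) (hbound : ∀ j < T, bound j < T) :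
    ∃ j : Fin m, bound j ≤ σ j := by
  by_contra! h
  have hmaps : Set.MapsTo σ ↑(Finset.univ.filter fun i : Fin m => (i : ℕ) < T)
      ↑(Finset.univ.filter fun i : Fin m => (i : ℕ) < T - 1) := by
    intro i hi
    simp only [Finset.coe_filter, Finset.mem_univ, true_and, Set.mem_ofPred_eq] at hi ⊢
    have := h i
    have := hbound i hi
    omega
  have hcard := Finset.card_le_card_of_injOn σ hmaps σ.injective.injOn
  rw [Fin.card_filter_val_lt, Fin.card_filter_val_lt] at hcard
  omega

theorem List.sum_take_lt_sum_take {l : List ℕ} {i j : ℕ} (hij : i < j) (hj : j ≤ l.length)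
    (hpos : 0 < l[i]) : (l.take i).sum < (l.take j).sum :=
  calc (l.take i).sum < (l.take i).sum + l[i] := Nat.lt_add_of_pos_right hpos
    _ = (l.take (i + 1)).sum := (l.sum_take_succ i (by omega)).symm
    _ ≤ (l.take j).sum := l.monotone_sum_take hij

theorem getD_concatRep_mem_take : ∀ {sizes vals : List ℕ} {u j : ℕ},
    sizes.length ≤ vals.length → j < (sizes.take u).sum →
    (concatRep sizes vals).getD j 0 ∈ vals.take u
  | [], _, _, _, _, hj => by simp at hj
  | _ :: _, [], _, _, hlen, _ => by simp at hlen
  | _ :: _, _ :: _, 0, _, _, hj => by simp at hj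
  | s :: sizes, v :: vals, u + 1, j, hlen, hj => by
    simp only [concatRep, List.zipWith_cons_cons, List.flatten_cons, List.take_succ_cons,
      List.sum_cons, List.length_cons, List.mem_cons] at hj hlen ⊢
    by_cases hjs : j < s
    · left
      rw [List.getD_append _ _ _ _ (by simpa using hjs), List.getD_eq_getElem _ _ (by simpa),
        List.getElem_replicate]
    · right
      rw [List.getD_append_right _ _ _ _ (by simpa using hjs), List.length_replicate]
      exact getD_concatRep_mem_take (by omega) (by omega)

theorem mkAlgHom_qdet_eq_zero_of_forall_perm {m : ℕ} (α β : k) (bl : List ℕ)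
    (h : ∀ σ : Equiv.Perm (Fin m), ∃ j : Fin m, bl.getD j 0 < (σ j : ℕ) + 1) :
    RingQuot.mkAlgHom k (BRelNat k m α β bl) (qdet k m α β) = 0 := by
  rw [qdet, map_sum]
  refine Finset.sum_eq_zero fun σ _ => ?_
  obtain ⟨j, hj⟩ := h σ
  rw [map_smul, map_list_prod, List.map_map, List.prod_eq_zero, smul_zero]
  refine List.mem_map.mpr ⟨j, List.mem_finRange j, ?_⟩
  simpa using RingQuot.mkAlgHom_rel k (s := BRelNat k m α β bl) ⟨⟨j, σ j, hj, rfl⟩, rfl⟩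

section Parabolic

variable {lam : List ℕ} {kIdx : ℕ}

theorem sum_take_succ_pos (hpos : ∀ a ∈ lam, 0 < a) (hk : kIdx < lam.length) :
    0 < (lam.take (kIdx + 1)).sum := by
  simpa using List.sum_take_lt_sum_take (Nat.succ_pos kIdx) (by omega)
    (hpos _ (lam.getElem_mem (by omega : 0 < lam.length)))

theorem getD_concatRep_set_lt_sum_take (hpos : ∀ a ∈ lam, 0 < a) (hk : kIdx < lam.length)
    {w : ℕ} (hkw : kIdx < w) (a : ℕ) {j : ℕ} (hj : j < (lam.take (kIdx + 1)).sum) :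
    (concatRep (lam.set w a) ((List.range lam.length).map fun r =>
        (lam.take (r + 1)).sum - (if kIdx ≤ r then 1 else 0))).getD j 0 <
      (lam.take (kIdx + 1)).sum := by
  set vals := (List.range lam.length).map fun r =>
    (lam.take (r + 1)).sum - (if kIdx ≤ r then 1 else 0)
  have hmem := getD_concatRep_mem_take (sizes := lam.set w a) (vals := vals) (u := kIdx + 1)
    (by simp [vals]) (by rwa [List.take_set_of_le hkw])
  rw [← List.map_take, List.take_range, List.mem_map] at hmem
  obtain ⟨r, hr, hrv⟩ := hmem
  rw [List.mem_range] at hr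
  rw [← hrv]
  split_ifs with hkr
  · obtain rfl : r = kIdx := by omega
    have := sum_take_succ_pos hpos hk
    omega
  · calc (lam.take (r + 1)).sum - 0 ≤ (lam.take kIdx).sum :=
          Nat.sub_le_of_le_add (lam.monotone_sum_take (by omega))
      _ < (lam.take (kIdx + 1)).sum :=
          List.sum_take_lt_sum_take (by omega) (by omega) (hpos _ (lam.getElem_mem hk))

end Parabolic

theorem qdet_mem_parabolic_ideal (α β : k)
    (lam : List ℕ) (hpos : ∀ a ∈ lam, 0 < a)
    (kIdx w : ℕ) (hkw : kIdx < w) (hw : w < lam.length)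
    (m : ℕ) (hm : m + 1 = lam.sum)
    (b' : List ℕ)
    (hb' : b' = concatRep
      (lam.set w (lam.getD w 0 - 1))
      ((List.range lam.length).map fun r =>
        (lam.take (r + 1)).sum - (if kIdx ≤ r then 1 else 0))) :
    (∀ σ : Equiv.Perm (Fin m), ∃ j : Fin m, b'.getD j 0 < (σ j : ℕ) + 1) ∧
    RingQuot.mkAlgHom k (BRelNat k m α β b') (qdet k m α β) = 0 := by
  have hk : kIdx < lam.length := hkw.trans hw
  have hTm : (lam.take (kIdx + 1)).sum ≤ m := Nat.lt_succ_iff.mp <|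
    calc (lam.take (kIdx + 1)).sum ≤ (lam.take w).sum := lam.monotone_sum_take hkw
      _ < (lam.take lam.length).sum :=
          List.sum_take_lt_sum_take hw le_rfl (hpos _ (lam.getElem_mem hw))
      _ = m + 1 := by rw [List.take_length, hm]
  have hperm : ∀ σ : Equiv.Perm (Fin m), ∃ j : Fin m, b'.getD j 0 < (σ j : ℕ) + 1 := by
    intro σ
    obtain ⟨j, hj⟩ := σ.exists_le_apply_of_forall_lt (sum_take_succ_pos hpos hk) hTm
      (b'.getD · 0) fun j hj => hb' ▸ getD_concatRep_set_lt_sum_take hpos hk hkw _ hj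
    exact ⟨j, Nat.lt_succ_of_le hj⟩
  exact ⟨hperm, mkAlgHom_qdet_eq_zero_of_forall_perm k α β b' hperm⟩
end
end
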